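/- arXiv:2108.07617 — 4 statements merged into one kernel-verified Lean document; each statement's English description precedes it below -/
import Mathlib

section
/- Let m ≥ 3 with m ≢ 0 (mod 4). Then for every N ∈ ℤ_2 there exists x ∈ ℤ_2 with ((m-2)/2)(x^2 - x) + x = N, where division by 2 is interpreted via the integrality of (m-2)(x^2-x)/2. Equivalently, the quadratic equation (m-2)x^2 - (m-4)x - 2N = 0 has a solution in ℤ_2. -/
/-!
The equation is solved by Hensel's lemma in `ℤ_[2]`, which only needs a simple root modulo 2.
For odd `m` the quadratic `(m-2)x² - (m-4)x - 2N` has the simple root `0` modulo 2, its linear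
coefficient `m - 4` being odd. For `m = 2(2k+1)` divide the equation by 2: the quadratic
`2k x² - (2k-1)x - N` has the simple root `N` modulo 2, its leading coefficient being even and its
linear one odd.
-/

open Polynomial

namespace PadicInt

variable {p : ℕ} [Fact p.Prime]

theorem norm_lt_one_iff_toZMod_eq_zero (x : ℤ_[p]) : ‖x‖ < 1 ↔ toZMod x = 0 := by
  rw [← mem_nonunits, ← IsLocalRing.mem_maximalIdeal, ← ker_toZMod, RingHom.mem_ker]

theorem norm_eq_one_iff_toZMod_ne_zero (x : ℤ_[p]) : ‖x‖ = 1 ↔ toZMod x ≠ 0 := by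
  rw [Ne, ← norm_lt_one_iff_toZMod_eq_zero, not_lt]
  exact ⟨ge_of_eq, (norm_le_one x).antisymm⟩

theorem exists_quadratic_eq_zero_of_toZMod (a b c x₀ : ℤ_[p])
    (hroot : toZMod (a * x₀ ^ 2 + b * x₀ + c) = 0) (hsimple : toZMod (2 * a * x₀ + b) ≠ 0) :
    ∃ x, a * x ^ 2 + b * x + c = 0 := by
  set F : ℤ_[p][X] := C a * X ^ 2 + C b * X + C c
  have hF : ∀ x, F.aeval x = a * x ^ 2 + b * x + c := fun x => by simp [F]
  have hF' : F.derivative.aeval x₀ = 2 * a * x₀ + b := by simp [F]; ring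
  have hnorm : ‖F.aeval x₀‖ < ‖F.derivative.aeval x₀‖ ^ 2 := by
    rw [hF, hF', (norm_eq_one_iff_toZMod_ne_zero _).2 hsimple, one_pow,
      norm_lt_one_iff_toZMod_eq_zero]
    exact hroot
  obtain ⟨x, hx, -⟩ := hensels_lemma hnorm
  exact ⟨x, (hF x).symm.trans hx⟩

end PadicInt

open PadicInt in
theorem stmt_4_general (m : ℤ) (h4 : ¬ (4 ∣ m)) (N : ℤ_[2]) :
    ∃ x : ℤ_[2], ((m : ℤ_[2]) - 2) * x ^ 2 - ((m : ℤ_[2]) - 4) * x - 2 * N = 0 := by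
  obtain ⟨j, rfl | rfl⟩ := Int.even_or_odd' m
  · obtain ⟨k, rfl | rfl⟩ := Int.even_or_odd' j
    · exact absurd ⟨k, by ring⟩ h4
    refine (exists_quadratic_eq_zero_of_toZMod (2 * (k : ℤ_[2])) (1 - 2 * (k : ℤ_[2])) (-N) N
      ?_ ?_).imp fun x hx => by push_cast; linear_combination 2 * hx
    all_goals simp only [map_add, map_sub, map_mul, map_neg, map_pow, map_ofNat, map_one,
      map_intCast]; grind
  · refine (exists_quadratic_eq_zero_of_toZMod (2 * (j : ℤ_[2]) - 1) (3 - 2 * (j : ℤ_[2]))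
      (-(2 * N)) 0 ?_ ?_).imp fun x hx => by push_cast; linear_combination hx
    all_goals simp only [map_add, map_sub, map_mul, map_neg, map_pow, map_ofNat, map_one,
      map_intCast, map_zero]; grind

/-- If `m ≥ 3` and `m ≢ 0 (mod 4)`, then for every `N ∈ ℤ_2` there is `x ∈ ℤ_2` with
`((m-2)/2)(x² - x) + x = N`, stated equivalently as `(m-2)x² - (m-4)x - 2N = 0`. -/
theorem stmt_4 (m : ℤ) (hm : 3 ≤ m) (h4 : ¬ (4 ∣ m)) (N : ℤ_[2]) :
    ∃ x : ℤ_[2], ((m : ℤ_[2]) - 2) * x ^ 2 - ((m : ℤ_[2]) - 4) * x - 2 * N = 0 :=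
  stmt_4_general m h4 N
end

section
/- Let p be an odd prime and a_1,…,a_n positive integers such that at least five of the a_i (counted with multiplicity) are p-adic units. Then for all A, B, k ∈ ℤ_p, the equation (B + k(m-2) - Σ_{i=2}^n a_i x_i)^2 + Σ_{i=2}^n a_1 a_i x_i^2 = (2A + B + k(m-4)) a_1 has a primitive solution (x_2,…,x_n) ∈ ℤ_p^{n-1}, i.e., a solution with min_i ord_p(x_i) = 0. -/
/-!
The equation reduces to the system `∑ bᵢxᵢ = C`, `∑ bᵢxᵢ² = D` with five unit weights: when five
of the `bᵢ` are units a solution of it solves the equation whatever `a₁` is, and when `a₁` is a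
unit it serves as a fifth weight whose variable `x₀` is absorbed by `a₁x₀ = C - ∑ bᵢxᵢ`.

Modulo `p` the system is solved by pairing variables. A pair of weights with `w + w' = 0` spans a
hyperbolic plane; a pair with `w + w' ≠ 0`, written as `(s + w'u, s - wu)`, contributes `(w + w')s`
to the linear equation and `(w + w')(s² + ww'u²)` to the quadratic one, and a binary diagonal form
represents every element of a finite field of odd characteristic. The residue solution has
`y₁ ≠ y₂`; eliminating `x₂` leaves a quadratic in `x₁` with unit derivative `2b₁b₂(y₁ - y₂)`, so
Hensel's lemma lifts it, and `x₁ ≢ x₂` forces one of them to be a unit.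
-/

open Finset Classical

open scoped Classical

section Field

variable {F : Type*} [Field F]

theorem exists_linear_quadratic_of_add_eq_zero (hF : ringChar F ≠ 2) {w₁ w₂ w₃ : F}
    (hw₁ : w₁ ≠ 0) (hw₃ : w₃ ≠ 0) (h : w₁ + w₂ = 0) (c d : F) :
    ∃ y₁ y₂ y₃ : F, y₁ ≠ y₂ ∧ w₁ * y₁ + w₂ * y₂ + w₃ * y₃ = c ∧
      w₁ * y₁ ^ 2 + w₂ * y₂ ^ 2 + w₃ * y₃ ^ 2 = d := by
  set y₃ := (c - w₁) / w₃
  set y₂ := ((d - w₃ * y₃ ^ 2) / w₁ - 1) / 2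
  have e₃ : w₃ * y₃ = c - w₁ := mul_div_cancel₀ _ hw₃
  have e₂ : w₁ * (2 * y₂ + 1) = d - w₃ * y₃ ^ 2 := by
    rw [mul_div_cancel₀ _ (Ring.two_ne_zero hF), sub_add_cancel, mul_div_cancel₀ _ hw₁]
  refine ⟨y₂ + 1, y₂, y₃, add_ne_left.mpr one_ne_zero, ?_, ?_⟩
  · linear_combination y₂ * h + e₃
  · linear_combination y₂ ^ 2 * h + e₂

variable [Fintype F]

open Polynomial in
theorem exists_mul_sq_add_mul_sq_eq (hF : ringChar F ≠ 2) {α β : F} (hα : α ≠ 0)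
    (hβ : β ≠ 0) (t : F) : ∃ g h : F, α * g ^ 2 + β * h ^ 2 = t := by
  obtain ⟨g, h, hgh⟩ := FiniteField.exists_root_sum_quadratic
    (degree_quadratic (b := 0) (c := -t) hα) (degree_quadratic (b := 0) (c := 0) hβ)
    (FiniteField.odd_card_of_char_ne_two hF)
  refine ⟨g, h, ?_⟩
  simp only [eval_add, eval_mul, eval_pow, eval_C, eval_X] at hgh
  linear_combination hgh

theorem exists_linear_quadratic_of_add_ne_zero (hF : ringChar F ≠ 2) {w₁ w₂ w₃ w₄ : F}
    (hw₁ : w₁ ≠ 0) (hw₂ : w₂ ≠ 0) (hw₃ : w₃ ≠ 0) (hw₄ : w₄ ≠ 0)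
    (h₁₂ : w₁ + w₂ ≠ 0) (h₃₄ : w₃ + w₄ ≠ 0) (c d : F) :
    ∃ y₁ y₂ y₃ y₄ : F, w₁ * y₁ + w₂ * y₂ + w₃ * y₃ + w₄ * y₄ = c ∧
      w₁ * y₁ ^ 2 + w₂ * y₂ ^ 2 + w₃ * y₃ ^ 2 + w₄ * y₄ ^ 2 = d := by
  set s := c / (w₁ + w₂)
  have hs : (w₁ + w₂) * s = c := mul_div_cancel₀ _ h₁₂
  obtain ⟨g, h, hgh⟩ := exists_mul_sq_add_mul_sq_eq hF
    (mul_ne_zero (mul_ne_zero hw₁ hw₂) h₁₂) (mul_ne_zero (mul_ne_zero hw₃ hw₄) h₃₄)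
    (d - (w₁ + w₂) * s ^ 2)
  exact ⟨s + w₂ * g, s - w₁ * g, w₄ * h, -(w₃ * h), by linear_combination hs,
    by linear_combination hgh⟩

theorem exists_linear_quadratic_four (hF : ringChar F ≠ 2) {w₁ w₂ w₃ w₄ : F}
    (hw₁ : w₁ ≠ 0) (hw₂ : w₂ ≠ 0) (hw₃ : w₃ ≠ 0) (hw₄ : w₄ ≠ 0) (c d : F) :
    ∃ y₁ y₂ y₃ y₄ : F, w₁ * y₁ + w₂ * y₂ + w₃ * y₃ + w₄ * y₄ = c ∧
      w₁ * y₁ ^ 2 + w₂ * y₂ ^ 2 + w₃ * y₃ ^ 2 + w₄ * y₄ ^ 2 = d := by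
  by_cases h₁₂ : w₁ + w₂ = 0
  · obtain ⟨y₁, y₂, y₃, -, hl, hq⟩ := exists_linear_quadratic_of_add_eq_zero hF hw₁ hw₃ h₁₂ c d
    exact ⟨y₁, y₂, y₃, 0, by linear_combination hl, by linear_combination hq⟩
  by_cases h₃₄ : w₃ + w₄ = 0
  · obtain ⟨y₃, y₄, y₁, -, hl, hq⟩ := exists_linear_quadratic_of_add_eq_zero hF hw₃ hw₁ h₃₄ c d
    exact ⟨y₁, 0, y₃, y₄, by linear_combination hl, by linear_combination hq⟩
  exact exists_linear_quadratic_of_add_ne_zero hF hw₁ hw₂ hw₃ hw₄ h₁₂ h₃₄ c d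

theorem exists_linear_quadratic_five (hF : ringChar F ≠ 2) {w₀ w₁ w₂ w₃ w₄ : F}
    (hw₀ : w₀ ≠ 0) (hw₁ : w₁ ≠ 0) (hw₃ : w₃ ≠ 0) (hw₄ : w₄ ≠ 0) (c d : F) :
    ∃ y₀ y₁ y₂ y₃ y₄ : F, y₁ ≠ y₂ ∧
      w₀ * y₀ + w₁ * y₁ + w₂ * y₂ + w₃ * y₃ + w₄ * y₄ = c ∧
      w₀ * y₀ ^ 2 + w₁ * y₁ ^ 2 + w₂ * y₂ ^ 2 + w₃ * y₃ ^ 2 + w₄ * y₄ ^ 2 = d := by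
  by_cases h₁₂ : w₁ + w₂ = 0
  · obtain ⟨y₁, y₂, y₀, hne, hl, hq⟩ := exists_linear_quadratic_of_add_eq_zero hF hw₁ hw₀ h₁₂ c d
    exact ⟨y₀, y₁, y₂, 0, 0, hne, by linear_combination hl, by linear_combination hq⟩
  obtain ⟨y₀, s, y₃, y₄, hl, hq⟩ := exists_linear_quadratic_four hF hw₀ h₁₂ hw₃ hw₄ c
    (d - w₁ * w₂ * (w₁ + w₂))
  refine ⟨y₀, s + w₂, s - w₁, y₃, y₄, fun h ↦ h₁₂ ?_, by linear_combination hl,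
    by linear_combination hq⟩
  linear_combination h

end Field

theorem Fintype.sum_extend_zero {ι κ M N : Type*} [Fintype ι] [Fintype κ] [Zero M]
    [AddCommMonoid N] (e : κ ↪ ι) (f : ι → M → N) (hf : ∀ i, f i 0 = 0) (z : κ → M) :
    ∑ i, f i (Function.extend e z 0 i) = ∑ j, f (e j) (z j) := by
  rw [← Finset.sum_subset (subset_univ (univ.map e)), sum_map]
  · simp only [e.injective.extend_apply]
  · intro i _ hi
    rw [Function.extend_apply' _ _ _ (by simpa using hi), Pi.zero_apply, hf]

theorem exists_embedding_fin_of_le_card_filter {ι : Type*} [Fintype ι] (P : ι → Prop)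
    [DecidablePred P] {k : ℕ} (h : k ≤ (univ.filter P).card) :
    ∃ e : Fin k ↪ ι, ∀ j, P (e j) := by
  obtain ⟨e⟩ := Function.Embedding.nonempty_of_card_le (α := Fin k) (β := {i // P i})
    (by simpa [Fintype.card_subtype] using h)
  exact ⟨e.trans (Function.Embedding.subtype P), fun j ↦ (e j).2⟩

namespace PadicInt

variable {p : ℕ} [Fact p.Prime]

theorem toZMod_eq_zero_iff {z : ℤ_[p]} : toZMod z = 0 ↔ ¬IsUnit z := by
  rw [← RingHom.mem_ker, ker_toZMod, IsLocalRing.mem_maximalIdeal, mem_nonunits_iff]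

theorem isUnit_iff_toZMod_ne_zero {z : ℤ_[p]} : IsUnit z ↔ toZMod z ≠ 0 := by
  rw [Ne, toZMod_eq_zero_iff, not_not]

open Polynomial in
theorem exists_root_toZMod_eq (f : ℤ_[p][X]) {a : ℤ_[p]} (h₀ : toZMod (f.eval a) = 0)
    (h₁ : IsUnit (f.derivative.eval a)) : ∃ z, f.eval z = 0 ∧ toZMod z = toZMod a := by
  have hd : ‖f.derivative.eval a‖ = 1 := isUnit_iff.mp h₁
  obtain ⟨z, hz, hdist, -⟩ := hensels_lemma (F := f) (a := a) (by
    simp only [coe_aeval_eq_eval, hd, one_pow]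
    exact not_isUnit_iff.mp (toZMod_eq_zero_iff.mp h₀))
  refine ⟨z, by simpa using hz, ?_⟩
  simp only [coe_aeval_eq_eval, hd] at hdist
  rwa [← not_isUnit_iff, ← toZMod_eq_zero_iff, map_sub, sub_eq_zero] at hdist

open Polynomial in
theorem exists_linear_quadratic_two (hp : p ≠ 2) {b₁ b₂ : ℤ_[p]} (hb₁ : IsUnit b₁)
    (hb₂ : IsUnit b₂) {R S a₁ a₂ : ℤ_[p]} (hR : toZMod (b₁ * a₁ + b₂ * a₂) = toZMod R)
    (hS : toZMod (b₁ * a₁ ^ 2 + b₂ * a₂ ^ 2) = toZMod S) (ha : toZMod a₁ ≠ toZMod a₂) :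
    ∃ x₁ x₂ : ℤ_[p], b₁ * x₁ + b₂ * x₂ = R ∧ b₁ * x₁ ^ 2 + b₂ * x₂ ^ 2 = S ∧
      IsUnit (x₁ - x₂) := by
  have h₂ : (2 : ZMod p) ≠ 0 := Ring.two_ne_zero (by rwa [ZMod.ringChar_zmod_n])
  have hb₁' := isUnit_iff_toZMod_ne_zero.mp hb₁
  have hb₂' := isUnit_iff_toZMod_ne_zero.mp hb₂
  simp only [map_add, map_mul, map_pow] at hR hS
  -- `f x₁ = b₂ (b₁ x₁² + b₂ x₂² - S)` once `b₂ x₂ = R - b₁ x₁`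
  set f : ℤ_[p][X] := C (b₁ * (b₁ + b₂)) * X ^ 2 - C (2 * b₁ * R) * X + C (R ^ 2 - b₂ * S)
  have hf : ∀ t, f.eval t = b₁ * b₂ * t ^ 2 + (R - b₁ * t) ^ 2 - b₂ * S := by
    intro t
    simp only [f, eval_add, eval_sub, eval_mul, eval_C, eval_pow, eval_X]
    ring
  have hf' : ∀ t, f.derivative.eval t = 2 * b₁ * b₂ * t - 2 * b₁ * (R - b₁ * t) := by
    intro t
    simp only [f, derivative_add, derivative_sub, derivative_C_mul_X_pow, derivative_C_mul_X,
      derivative_C, eval_add, eval_sub, eval_mul, eval_C, eval_pow, eval_X, eval_zero]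
    ring
  obtain ⟨x₁, hx₁, hres⟩ := exists_root_toZMod_eq f (a := a₁)
    (by rw [hf]; simp only [map_add, map_sub, map_mul, map_pow, ← hR, ← hS]; ring)
    (by
      rw [hf', isUnit_iff_toZMod_ne_zero]
      simp only [map_sub, map_mul, map_ofNat, ← hR]
      convert mul_ne_zero (mul_ne_zero (mul_ne_zero h₂ hb₁') hb₂') (sub_ne_zero.mpr ha) using 1
      ring)
  obtain ⟨c, hc⟩ := hb₂.exists_left_inv
  set x₂ := c * (R - b₁ * x₁)
  have hx₂ : b₂ * x₂ = R - b₁ * x₁ := by linear_combination (R - b₁ * x₁) * hc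
  refine ⟨x₁, x₂, by linear_combination hx₂, ?_, ?_⟩
  · apply mul_left_cancel₀ hb₂.ne_zero
    rw [hf] at hx₁
    linear_combination hx₁ + (b₂ * x₂ + R - b₁ * x₁) * hx₂
  · have hres₂ : toZMod x₂ = toZMod a₂ := by
      refine mul_left_cancel₀ hb₂' ?_
      have := congrArg toZMod hx₂
      simp only [map_mul, map_sub, hres] at this
      linear_combination this - hR
    rw [isUnit_iff_toZMod_ne_zero, map_sub, hres, hres₂]
    exact sub_ne_zero.mpr ha

theorem exists_linear_quadratic_five (hp : p ≠ 2) {b₀ b₁ b₂ b₃ b₄ : ℤ_[p]} (hb₀ : IsUnit b₀)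
    (hb₁ : IsUnit b₁) (hb₂ : IsUnit b₂) (hb₃ : IsUnit b₃) (hb₄ : IsUnit b₄) (C D : ℤ_[p]) :
    ∃ x₀ x₁ x₂ x₃ x₄ : ℤ_[p], b₀ * x₀ + b₁ * x₁ + b₂ * x₂ + b₃ * x₃ + b₄ * x₄ = C ∧
      b₀ * x₀ ^ 2 + b₁ * x₁ ^ 2 + b₂ * x₂ ^ 2 + b₃ * x₃ ^ 2 + b₄ * x₄ ^ 2 = D ∧
      (IsUnit x₁ ∨ IsUnit x₂) := by
  obtain ⟨y₀, y₁, y₂, y₃, y₄, hne, hl, hq⟩ :=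
    _root_.exists_linear_quadratic_five (w₂ := toZMod b₂) (by rwa [ZMod.ringChar_zmod_n])
      (isUnit_iff_toZMod_ne_zero.mp hb₀) (isUnit_iff_toZMod_ne_zero.mp hb₁)
      (isUnit_iff_toZMod_ne_zero.mp hb₃) (isUnit_iff_toZMod_ne_zero.mp hb₄) (toZMod C) (toZMod D)
  have hsurj := ZMod.ringHom_surjective (toZMod : ℤ_[p] →+* ZMod p)
  obtain ⟨a₀, rfl⟩ := hsurj y₀
  obtain ⟨a₁, rfl⟩ := hsurj y₁
  obtain ⟨a₂, rfl⟩ := hsurj y₂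
  obtain ⟨a₃, rfl⟩ := hsurj y₃
  obtain ⟨a₄, rfl⟩ := hsurj y₄
  obtain ⟨x₁, x₂, hl', hq', hu⟩ := exists_linear_quadratic_two hp hb₁ hb₂
    (R := C - (b₀ * a₀ + b₃ * a₃ + b₄ * a₄)) (S := D - (b₀ * a₀ ^ 2 + b₃ * a₃ ^ 2 + b₄ * a₄ ^ 2))
    (by simp only [map_add, map_sub, map_mul]; linear_combination hl)
    (by simp only [map_add, map_sub, map_mul, map_pow]; linear_combination hq) hne
  refine ⟨a₀, x₁, x₂, a₃, a₄, by linear_combination hl', by linear_combination hq', ?_⟩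
  rw [sub_eq_add_neg] at hu
  exact (IsLocalRing.isUnit_or_isUnit_of_isUnit_add hu).imp_right (IsUnit.neg_iff _).mp

theorem exists_primitive_of_five_le_card_isUnit (hp : p ≠ 2) {n : ℕ} (b : Fin n → ℤ_[p])
    (hb : 5 ≤ (univ.filter fun i ↦ IsUnit (b i)).card) (a C D : ℤ_[p]) :
    ∃ x : Fin n → ℤ_[p], (C - ∑ i, b i * x i) ^ 2 + ∑ i, a * b i * x i ^ 2 = D * a ∧
      ∃ i, IsUnit (x i) := by
  obtain ⟨e, he⟩ := exists_embedding_fin_of_le_card_filter _ hb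
  obtain ⟨x₀, x₁, x₂, x₃, x₄, hl, hq, hx⟩ :=
    exists_linear_quadratic_five hp (he 0) (he 1) (he 2) (he 3) (he 4) C D
  refine ⟨Function.extend e ![x₀, x₁, x₂, x₃, x₄] 0, ?_, ?_⟩
  · rw [Fintype.sum_extend_zero e (fun i t ↦ b i * t) (by simp),
      Fintype.sum_extend_zero e (fun i t ↦ a * b i * t ^ 2) (by simp)]
    simp only [Fin.sum_univ_five, Matrix.cons_val]
    rw [← hl, ← hq]
    ring
  · rcases hx with h | h
    · exact ⟨e 1, by rwa [e.injective.extend_apply]⟩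
    · exact ⟨e 2, by rwa [e.injective.extend_apply]⟩

theorem exists_primitive_of_isUnit_of_four_le_card_isUnit (hp : p ≠ 2) {n : ℕ}
    (b : Fin n → ℤ_[p]) (hb : 4 ≤ (univ.filter fun i ↦ IsUnit (b i)).card) {a : ℤ_[p]}
    (ha : IsUnit a) (C D : ℤ_[p]) :
    ∃ x : Fin n → ℤ_[p], (C - ∑ i, b i * x i) ^ 2 + ∑ i, a * b i * x i ^ 2 = D * a ∧
      ∃ i, IsUnit (x i) := by
  obtain ⟨e, he⟩ := exists_embedding_fin_of_le_card_filter _ hb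
  obtain ⟨x₀, x₁, x₂, x₃, x₄, hl, hq, hx⟩ :=
    exists_linear_quadratic_five hp ha (he 0) (he 1) (he 2) (he 3) C D
  refine ⟨Function.extend e ![x₁, x₂, x₃, x₄] 0, ?_, ?_⟩
  · rw [Fintype.sum_extend_zero e (fun i t ↦ b i * t) (by simp),
      Fintype.sum_extend_zero e (fun i t ↦ a * b i * t ^ 2) (by simp)]
    simp only [Fin.sum_univ_four, Matrix.cons_val]
    rw [← hl, ← hq]
    ring
  · rcases hx with h | h
    · exact ⟨e 0, by rwa [e.injective.extend_apply]⟩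
    · exact ⟨e 1, by rwa [e.injective.extend_apply]⟩

end PadicInt

theorem stmt_11_general (p : ℕ) [Fact p.Prime] (hp : p ≠ 2) (m : ℤ)
    (n : ℕ) (a₁ : ℤ) (b : Fin n → ℤ)
    (hunits : 5 ≤ (if IsUnit ((a₁ : ℤ_[p])) then 1 else 0)
        + (univ.filter (fun i => IsUnit ((b i : ℤ_[p])))).card)
    (A B k : ℤ_[p]) :
    ∃ x : Fin n → ℤ_[p],
      (B + k * ((m : ℤ_[p]) - 2) - ∑ i, (b i : ℤ_[p]) * x i) ^ 2
          + ∑ i, (a₁ : ℤ_[p]) * (b i : ℤ_[p]) * (x i) ^ 2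
        = (2 * A + B + k * ((m : ℤ_[p]) - 4)) * (a₁ : ℤ_[p]) ∧
      ∃ i, IsUnit (x i) := by
  by_cases ha : IsUnit (a₁ : ℤ_[p])
  · rw [if_pos ha] at hunits
    exact PadicInt.exists_primitive_of_isUnit_of_four_le_card_isUnit hp _ (by omega) ha _ _
  · rw [if_neg ha] at hunits
    exact PadicInt.exists_primitive_of_five_le_card_isUnit hp _ (by omega) _ _ _

/-- If among the positive integers `a₁, a₂, …, aₙ` (with multiplicity) at least five are
`p`-adic units (`p` an odd prime), then for all `A, B, k ∈ ℤ_p` the equation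
`(B+k(m-2) - ∑ aᵢxᵢ)² + ∑ a₁aᵢxᵢ² = (2A+B+k(m-4))a₁` has a primitive solution
`(x₂,…,xₙ) ∈ ℤ_p^{n-1}`, i.e. one with some coordinate a unit. -/
theorem stmt_11 (p : ℕ) [Fact p.Prime] (hp : p ≠ 2) (m : ℤ) (hm : 3 ≤ m)
    (n : ℕ) (a₁ : ℤ) (b : Fin n → ℤ) (ha₁ : 0 < a₁) (hb : ∀ i, 0 < b i)
    (hunits : 5 ≤ (if IsUnit ((a₁ : ℤ_[p])) then 1 else 0)
        + (univ.filter (fun i => IsUnit ((b i : ℤ_[p])))).card)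
    (A B k : ℤ_[p]) :
    ∃ x : Fin n → ℤ_[p],
      (B + k * ((m : ℤ_[p]) - 2) - ∑ i, (b i : ℤ_[p]) * x i) ^ 2
          + ∑ i, (a₁ : ℤ_[p]) * (b i : ℤ_[p]) * (x i) ^ 2
        = (2 * A + B + k * ((m : ℤ_[p]) - 4)) * (a₁ : ℤ_[p]) ∧
      ∃ i, IsUnit (x i) :=
  stmt_11_general p hp m n a₁ b hunits A B k
end

section
/- Over ℚ_p (any prime p), every nondegenerate quadratic form in n ≥ 5 variables is isotropic; in particular, for positive integers a_1,…,a_n with n ≥ 5, the form a_1 x_1^2 + ⋯ + a_n x_n^2 has a nontrivial zero in ℚ_p^n. -/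
/-!
Diagonalise, and rescale each coefficient by a square so that its valuation is 0 or 1; after
multiplying the whole form by `p` if necessary, at least three of the (at least five)
coefficients are units. Hensel's lemma turns an approximate zero with a unit coordinate at a unit
coefficient into an exact zero. For odd `p`, `a x² + b y² + c` has a zero mod `p` since the values
of `a x²` and `-(b y² + c)` are two sets of `(p + 1) / 2` residues. For `p = 2` one needs a zero
mod 8: take the 0/1 vector on a set `S` of coefficients summing to 0 mod 4, and if the value is
only 4 mod 8 put a 2 in a further unit coordinate. Such an `S` is a pair of units in different
classes mod 4, or else two units and a coefficient of valuation 1, or four units.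
-/

open Finset Function

def IsIsotropicDiagonal {R ι : Type*} [CommRing R] [Fintype ι] (w : ι → R) : Prop :=
  ∃ v : ι → R, v ≠ 0 ∧ ∑ i, w i * v i ^ 2 = 0

namespace IsIsotropicDiagonal

variable {R S ι κ : Type*} [CommRing R] [CommRing S] [Fintype ι] [Fintype κ] {w : ι → R}

theorem of_eq_zero [Nontrivial R] {i : ι} (hi : w i = 0) : IsIsotropicDiagonal w := by
  classical
  refine ⟨Pi.single i 1, fun h => by simpa using congrFun h i, ?_⟩
  rw [Fintype.sum_eq_single i fun j hj => by simp [hj], hi, zero_mul]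

theorem of_comp_injective {f : κ → ι} (hf : Injective f) (h : IsIsotropicDiagonal (w ∘ f)) :
    IsIsotropicDiagonal w := by
  classical
  obtain ⟨t, ht, hsum⟩ := h
  obtain ⟨k, hk⟩ := Function.ne_iff.mp ht
  refine ⟨extend f t 0, fun h0 => hk (by simpa [hf.extend_apply] using congrFun h0 (f k)), ?_⟩
  rw [← Finset.sum_subset (Finset.subset_univ (univ.map ⟨f, hf⟩)), Finset.sum_map]
  · simpa [hf.extend_apply] using hsum
  · intro i _ hi
    rw [extend_apply' _ _ _ (by simpa using hi)]
    simp

theorem of_sq_mul [IsDomain R] {s : ι → R} (hs : ∀ i, s i ≠ 0)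
    (h : IsIsotropicDiagonal fun i => s i ^ 2 * w i) : IsIsotropicDiagonal w := by
  obtain ⟨v, hv, hsum⟩ := h
  obtain ⟨k, hk⟩ := Function.ne_iff.mp hv
  refine ⟨s * v, fun h0 => hk (by simpa [hs k] using congrFun h0 k), ?_⟩
  simpa [mul_pow, mul_left_comm, mul_assoc] using hsum

theorem of_mul [IsDomain R] {c : R} (hc : c ≠ 0)
    (h : IsIsotropicDiagonal fun i => c * w i) : IsIsotropicDiagonal w := by
  obtain ⟨v, hv, hsum⟩ := h
  refine ⟨v, hv, ?_⟩
  simpa [mul_assoc, ← Finset.mul_sum, hc] using hsum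

theorem map {f : R →+* S} (hf : Injective f) (h : IsIsotropicDiagonal w) :
    IsIsotropicDiagonal (f ∘ w) := by
  obtain ⟨v, hv, hsum⟩ := h
  refine ⟨f ∘ v, fun h0 => hv (funext fun i => hf (by simpa using congrFun h0 i)), ?_⟩
  simpa using congrArg f hsum

end IsIsotropicDiagonal

theorem QuadraticForm.not_anisotropic_of_forall_isIsotropicDiagonal {K V : Type*} [Field K]
    [NeZero (2 : K)] [AddCommGroup V] [Module K V] [FiniteDimensional K V]
    (Q : QuadraticForm K V)
    (h : ∀ w : Fin (Module.finrank K V) → K, IsIsotropicDiagonal w) : ¬ Q.Anisotropic := by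
  let _ : Invertible (2 : K) := invertibleOfNonzero two_ne_zero
  obtain ⟨w, ⟨e⟩⟩ := Q.equivalent_weightedSumSquares
  obtain ⟨v, hv, hsum⟩ := h w
  refine (Q.not_anisotropic_iff_exists).mpr ⟨e.symm v, by simpa using hv, ?_⟩
  rw [e.symm.map_app, QuadraticMap.weightedSumSquares_apply]
  simpa [sq] using hsum

namespace PadicInt

variable {p : ℕ} [Fact p.Prime] {ι : Type*} [Fintype ι]

theorem toZMod_eq_zero_iff_dvd (x : ℤ_[p]) : toZMod x = 0 ↔ (p : ℤ_[p]) ∣ x := by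
  rw [← RingHom.mem_ker, ker_toZMod, maximalIdeal_eq_span_p, Ideal.mem_span_singleton]

theorem norm_eq_one_iff_not_dvd (x : ℤ_[p]) : ‖x‖ = 1 ↔ ¬ (p : ℤ_[p]) ∣ x := by
  rw [← norm_lt_one_iff_dvd, not_lt]
  exact ⟨ge_of_eq, (norm_le_one x).antisymm⟩

theorem pow_dvd_iff_le_valuation {x : ℤ_[p]} (hx : x ≠ 0) (n : ℕ) :
    (p : ℤ_[p]) ^ n ∣ x ↔ n ≤ x.valuation := by
  rw [← Ideal.mem_span_singleton, mem_span_pow_iff_le_valuation x hx]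

theorem isIsotropicDiagonal_of_norm_lt {w x : ι → ℤ_[p]} {i : ι}
    (h : ‖∑ j, w j * x j ^ 2‖ < ‖2 * w i * x i‖ ^ 2) : IsIsotropicDiagonal w := by
  classical
  set B := ∑ j ∈ univ.erase i, w j * x j ^ 2
  have hsplit (y : ι → ℤ_[p]) (hy : ∀ j ≠ i, y j = x j) :
      ∑ j, w j * y j ^ 2 = w i * y i ^ 2 + B := by
    rw [← add_sum_erase _ _ (mem_univ i)]
    exact congrArg _ (sum_congr rfl fun j hj => by rw [hy j (ne_of_mem_erase hj)])
  let F : Polynomial ℤ_[p] := .C (w i) * .X ^ 2 + .C B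
  have hF (z : ℤ_[p]) : F.aeval z = w i * z ^ 2 + B := by simp [F]
  have hF' (z : ℤ_[p]) : F.derivative.aeval z = 2 * w i * z := by simp [F]; ring
  obtain ⟨z, hz, hzx, -⟩ :=
    hensels_lemma (F := F) (a := x i) (by rwa [hF, hF', ← hsplit x fun _ _ => rfl])
  have hz0 : z ≠ 0 := by
    rintro rfl
    rw [hF', zero_sub, norm_neg, norm_mul] at hzx
    exact (mul_le_of_le_one_left (norm_nonneg _) (norm_le_one _)).not_gt hzx
  refine ⟨update x i z, fun h0 => hz0 (by simpa using congrFun h0 i), ?_⟩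
  rw [hsplit _ fun j hj => update_of_ne hj _ _, update_self, ← hF, hz]

theorem norm_two_eq_one (hp : p ≠ 2) : ‖(2 : ℤ_[p])‖ = 1 := by
  rw [← Nat.cast_ofNat, norm_natCast_eq_one_iff]
  exact (Nat.coprime_primes Fact.out Nat.prime_two).mpr hp

theorem isIsotropicDiagonal_three (hp : p ≠ 2) {a : Fin 3 → ℤ_[p]}
    (ha : ∀ m, ¬ (p : ℤ_[p]) ∣ a m) : IsIsotropicDiagonal a := by
  open Polynomial in
  have hdeg {u : ℤ_[p]} (hu : ¬ (p : ℤ_[p]) ∣ u) : (C (toZMod u) * X ^ 2).degree = 2 :=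
    degree_C_mul_X_pow 2 (mt (toZMod_eq_zero_iff_dvd u).mp hu)
  have hcard : Fintype.card (ZMod p) % 2 = 1 := by
    rw [ZMod.card, ← Nat.odd_iff]
    exact (Fact.out : p.Prime).odd_of_ne_two hp
  obtain ⟨A, B, hAB⟩ := FiniteField.exists_root_sum_quadratic (hdeg (ha 0))
    (g := C (toZMod (a 1)) * X ^ 2 + C (toZMod (a 2)))
    (by rw [degree_add_C (by rw [hdeg (ha 1)]; decide), hdeg (ha 1)]) hcard
  let x : Fin 3 → ℤ_[p] := ![A.val, B.val, 1]
  have hx : (p : ℤ_[p]) ∣ ∑ j, a j * x j ^ 2 := by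
    rw [← toZMod_eq_zero_iff_dvd]
    simpa [Fin.sum_univ_three, x, add_assoc] using hAB
  refine isIsotropicDiagonal_of_norm_lt (x := x) (i := 2) ?_
  simpa [x, norm_two_eq_one hp, (norm_eq_one_iff_not_dvd _).mpr (ha 2), norm_lt_one_iff_dvd]
    using hx

theorem two_dvd_add_of_not_two_dvd {a b : ℤ_[2]} (ha : ¬ 2 ∣ a) (hb : ¬ 2 ∣ b) : 2 ∣ a + b := by
  rw [← Nat.cast_ofNat (R := ℤ_[2]), ← toZMod_eq_zero_iff_dvd] at ha hb ⊢
  rw [map_add]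
  generalize toZMod a = x at ha
  generalize toZMod b = y at hb
  revert x y
  decide

theorem four_dvd_add_of_not_four_dvd_sub {a b : ℤ_[2]} (ha : ¬ 2 ∣ a) (hb : ¬ 2 ∣ b)
    (hab : ¬ 4 ∣ a - b) : 4 ∣ a + b := by
  obtain ⟨t, ht⟩ := two_dvd_add_of_not_two_dvd ha (b := -b) (by rwa [dvd_neg])
  have ht2 : ¬ 2 ∣ t := fun h => hab (by
    rw [sub_eq_add_neg, ht, show (4 : ℤ_[2]) = 2 * 2 by norm_num]
    exact mul_dvd_mul_left 2 h)
  obtain ⟨s, hs⟩ := two_dvd_add_of_not_two_dvd ht2 hb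
  exact ⟨s, by linear_combination ht + 2 * hs⟩

theorem norm_two : ‖(2 : ℤ_[2])‖ = 2⁻¹ := by
  simpa using norm_p (p := 2)

theorem isIsotropicDiagonal_of_four_dvd_sum {w : ι → ℤ_[2]} (S : Finset ι) {i k : ι}
    (hi : i ∈ S) (hk : k ∉ S) (hwi : ¬ 2 ∣ w i) (hwk : ¬ 2 ∣ w k)
    (hS : 4 ∣ ∑ j ∈ S, w j) : IsIsotropicDiagonal w := by
  classical
  obtain ⟨t, ht⟩ := hS
  obtain ⟨y, hy⟩ : ∃ y : ℤ_[2], 8 ∣ 4 * t + w k * y ^ 2 := by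
    by_cases h : 2 ∣ t
    · obtain ⟨s, rfl⟩ := h
      exact ⟨0, s, by ring⟩
    · obtain ⟨s, hs⟩ := two_dvd_add_of_not_two_dvd h hwk
      exact ⟨2, s, by linear_combination 4 * hs⟩
  let x : ι → ℤ_[2] := fun j => if j ∈ S then 1 else if j = k then y else 0
  have hx : ∑ j, w j * x j ^ 2 = 4 * t + w k * y ^ 2 := by
    rw [← ht, ← sum_subset (subset_univ (insert k S)) fun j _ hj => by simp_all [x],
      sum_insert hk, add_comm]
    simp +contextual [x, hk]
  refine isIsotropicDiagonal_of_norm_lt (x := x) (i := i) ?_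
  obtain ⟨q, hq⟩ := hy
  rw [hx, hq, norm_mul, show (8 : ℤ_[2]) = 2 ^ 3 by norm_num, norm_pow]
  simp only [x, hi, if_true, mul_one, norm_mul, norm_two, (norm_eq_one_iff_not_dvd _).mpr hwi]
  exact (mul_le_of_le_one_right (by positivity) (norm_le_one q)).trans_lt (by norm_num)

open scoped Classical in
theorem isIsotropicDiagonal_two {w : ι → ℤ_[2]} (hw : ∀ i, ¬ 4 ∣ w i)
    (h3 : 3 ≤ #{i | ¬ 2 ∣ w i}) (h5 : 5 ≤ Fintype.card ι) : IsIsotropicDiagonal w := by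
  set U : Finset ι := {i | ¬ 2 ∣ w i}
  have hU {i : ι} : i ∈ U ↔ ¬ 2 ∣ w i := by simp [U]
  by_cases hA : ∃ i ∈ U, ∃ j ∈ U, ¬ 4 ∣ w i - w j
  · obtain ⟨i, hi, j, hj, hij⟩ := hA
    have hne : i ≠ j := by rintro rfl; simp at hij
    obtain ⟨k, hk⟩ : ((U.erase i).erase j).Nonempty := by
      rw [← card_pos, card_erase_of_mem (mem_erase.mpr ⟨hne.symm, hj⟩), card_erase_of_mem hi]
      omega
    obtain ⟨hkj, hki, hk⟩ := by simpa only [mem_erase] using hk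
    refine isIsotropicDiagonal_of_four_dvd_sum {i, j} (mem_insert_self i _) (k := k)
      (by simp [hki, hkj]) (hU.mp hi) (hU.mp hk) ?_
    rw [sum_pair hne]
    exact four_dvd_add_of_not_four_dvd_sub (hU.mp hi) (hU.mp hj) hij
  push Not at hA
  by_cases hB : ∃ d, 2 ∣ w d
  · obtain ⟨d, d', hd'⟩ := hB
    have hd2 : ¬ 2 ∣ d' := fun h => hw d (by
      rw [hd', show (4 : ℤ_[2]) = 2 * 2 by norm_num]; exact mul_dvd_mul_left 2 h)
    obtain ⟨i, hi, j, hj, k, hk, hij, hik, hjk⟩ := two_lt_card.mp h3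
    have hdU {l : ι} (hl : l ∈ U) : d ≠ l := by
      rintro rfl; exact hU.mp hl ⟨d', hd'⟩
    refine isIsotropicDiagonal_of_four_dvd_sum {d, i, j} (mem_insert_of_mem
      (mem_insert_self i _)) (k := k) (by simp [hik.symm, hjk.symm, (hdU hk).symm])
      (hU.mp hi) (hU.mp hk) ?_
    rw [sum_insert (by simp [hdU hi, hdU hj]), sum_pair hij]
    obtain ⟨s, hs⟩ := hA j hj i hi
    obtain ⟨r, hr⟩ := two_dvd_add_of_not_two_dvd hd2 (hU.mp hi)
    exact ⟨s + r, by linear_combination hd' + hs + 2 * hr⟩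
  · push Not at hB
    have hU' (i : ι) : i ∈ U := hU.mpr (hB i)
    obtain ⟨m⟩ : Nonempty ι := Fintype.card_pos_iff.mp (by omega)
    obtain ⟨S, hSm, hS4⟩ := exists_subset_card_eq (s := univ.erase m) (n := 4)
      (by rw [card_erase_of_mem (mem_univ m), card_univ]; omega)
    obtain ⟨i, hi⟩ : S.Nonempty := by rw [← card_pos]; omega
    refine isIsotropicDiagonal_of_four_dvd_sum S hi (k := m) (fun h => by simpa using hSm h)
      (hB i) (hB m) ?_
    have hsum : ∑ j ∈ S, w j = ∑ j ∈ S, (w j - w m) + 4 * w m := by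
      rw [sum_sub_distrib, sum_const, hS4]; ring
    rw [hsum]
    exact dvd_add (dvd_sum fun j _ => hA j (hU' j) m (hU' m)) (dvd_mul_right 4 _)

open scoped Classical in
theorem isIsotropicDiagonal_of_three_le {w : ι → ℤ_[p]} (hw : ∀ i, ¬ (p : ℤ_[p]) ^ 2 ∣ w i)
    (h3 : 3 ≤ #{i | ¬ (p : ℤ_[p]) ∣ w i}) (h5 : 5 ≤ Fintype.card ι) :
    IsIsotropicDiagonal w := by
  rcases eq_or_ne p 2 with rfl | hp
  · exact isIsotropicDiagonal_two (by norm_num at hw; exact hw) (by simpa using h3) h5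
  · obtain ⟨i, hi, j, hj, k, hk, hij, hik, hjk⟩ := two_lt_card.mp h3
    refine IsIsotropicDiagonal.of_comp_injective (f := ![i, j, k]) ?_
      (isIsotropicDiagonal_three hp ?_)
    · simp [Injective, Fin.forall_fin_succ, hij, hik, hjk, hij.symm, hik.symm, hjk.symm]
    · simp_all [Fin.forall_fin_succ]

end PadicInt

namespace Padic

variable {p : ℕ} [Fact p.Prime] {ι : Type*} [Fintype ι]

theorem exists_sq_mul_valuation_eq_emod {x : ℚ_[p]} (hx : x ≠ 0) :
    ∃ s : ℚ_[p], s ≠ 0 ∧ (s ^ 2 * x).valuation = x.valuation % 2 := by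
  have hp : (p : ℚ_[p]) ≠ 0 := Nat.cast_ne_zero.mpr (Fact.out : p.Prime).ne_zero
  refine ⟨(p : ℚ_[p]) ^ (-(x.valuation / 2)), zpow_ne_zero _ hp, ?_⟩
  rw [valuation_mul (pow_ne_zero _ (zpow_ne_zero _ hp)) hx, valuation_pow, valuation_zpow,
    valuation_p, Int.emod_def]
  push_cast
  ring

open scoped Classical in
theorem isIsotropicDiagonal_of_valuation {w : ι → ℚ_[p]} (hw : ∀ i, w i ≠ 0)
    (hv : ∀ i, (w i).valuation = 0 ∨ (w i).valuation = 1)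
    (h3 : 3 ≤ #{i | (w i).valuation = 0}) (h5 : 5 ≤ Fintype.card ι) :
    IsIsotropicDiagonal w := by
  have hint (i : ι) : ‖w i‖ ≤ 1 := (norm_le_one_iff_val_nonneg _).mpr (by have := hv i; omega)
  let W : ι → ℤ_[p] := fun i => ⟨w i, hint i⟩
  have hW (i : ι) : W i ≠ 0 := fun h => hw i (congrArg Subtype.val h)
  have hWv (i : ι) : ((W i).valuation : ℤ) = (w i).valuation := (PadicInt.valuation_coe _).symm
  show IsIsotropicDiagonal (PadicInt.Coe.ringHom ∘ W)
  refine IsIsotropicDiagonal.map (f := PadicInt.Coe.ringHom) Subtype.val_injective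
    (PadicInt.isIsotropicDiagonal_of_three_le (fun i => ?_) ?_ h5)
  · rw [PadicInt.pow_dvd_iff_le_valuation (hW i)]
    have := hv i
    have := hWv i
    omega
  · convert h3 using 3 with i
    rw [← pow_one (p : ℤ_[p]), PadicInt.pow_dvd_iff_le_valuation (hW i), ← hWv i]
    omega

open scoped Classical in
theorem exists_three_le_card_even_valuation {w : ι → ℚ_[p]} (hw : ∀ i, w i ≠ 0)
    (h5 : 5 ≤ Fintype.card ι) :
    ∃ c : ℚ_[p], c ≠ 0 ∧ 3 ≤ #{i | Even (c * w i).valuation} := by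
  by_cases h : 3 ≤ #{i | Even (w i).valuation}
  · exact ⟨1, one_ne_zero, by simpa using h⟩
  · have hp : (p : ℚ_[p]) ≠ 0 := Nat.cast_ne_zero.mpr (Fact.out : p.Prime).ne_zero
    refine ⟨p, hp, ?_⟩
    have hodd := card_filter_add_card_filter_not (s := univ) (fun i => Even (w i).valuation)
    simp only [valuation_mul hp (hw _), valuation_p, add_comm (1 : ℤ), Int.even_add_one]
    rw [card_univ] at hodd
    omega

theorem isIsotropicDiagonal (w : ι → ℚ_[p]) (h5 : 5 ≤ Fintype.card ι) :
    IsIsotropicDiagonal w := by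
  by_cases hz : ∃ i, w i = 0
  · obtain ⟨i, hi⟩ := hz
    exact .of_eq_zero hi
  push Not at hz
  obtain ⟨c, hc, h3⟩ := exists_three_le_card_even_valuation hz h5
  have hcw (i : ι) : c * w i ≠ 0 := mul_ne_zero hc (hz i)
  choose s hs hsv using fun i => exists_sq_mul_valuation_eq_emod (hcw i)
  refine .of_mul hc (.of_sq_mul hs (isIsotropicDiagonal_of_valuation
    (fun i => mul_ne_zero (pow_ne_zero 2 (hs i)) (hcw i)) (fun i => ?_) ?_ h5))
  · rw [hsv]
    exact Int.emod_two_eq _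
  · simpa [hsv, Int.even_iff] using h3

end Padic

/-- Over `ℚ_p`, every nondegenerate quadratic form in `n ≥ 5` variables is isotropic;
in particular, for positive integers `a₁,…,aₙ` with `n ≥ 5`, the form `∑ aᵢxᵢ²` has a
nontrivial zero in `ℚ_pⁿ`. -/
theorem stmt_16 (p : ℕ) [Fact p.Prime] (n : ℕ) (hn : 5 ≤ n) :
    (∀ Q : QuadraticForm ℚ_[p] (Fin n → ℚ_[p]),
      (QuadraticMap.polarBilin Q).Nondegenerate → ¬ Q.Anisotropic) ∧
    (∀ a : Fin n → ℤ, (∀ i, 0 < a i) →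
      ∃ v : Fin n → ℚ_[p], v ≠ 0 ∧ ∑ i, (a i : ℚ_[p]) * (v i) ^ 2 = 0) :=
  ⟨fun Q _ => Q.not_anisotropic_of_forall_isIsotropicDiagonal fun w =>
      Padic.isIsotropicDiagonal w (by simpa using hn),
    fun a _ => Padic.isIsotropicDiagonal _ (by simpa using hn)⟩
end

section
/- Let p be an odd prime, u ∈ ℤ_p^×, and r ≥ 1. Then (ℤ_p^× + u/p^r)^2 = (p^r ℤ_p^× + u^2)/p^{2r} and (ℤ_p + u/p^r)^2 = (p^r ℤ_p + u^2)/p^{2r} as subsets of ℚ_p. -/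
/-!
Writing `φ v = p^r v² + 2uv`, one has `(v + u/p^r)² = (p^r φ(v) + u²)/p^{2r}`, so both sides are
images of `ℤ_p` (resp. `ℤ_p^×`) under this formula. Since `p` is odd, `2u` is a unit, hence so is
`p^r v + 2u`, and `φ v = v (p^r v + 2u)` is a unit exactly when `v` is. Surjectivity of `φ` on `ℤ_p`
is Hensel's lemma for `p^r X² + 2uX - w`, starting from the approximate root `w/(2u)`.
-/

open Polynomial

namespace PadicInt

variable {p : ℕ} [Fact p.Prime]

theorem isUnit_add_of_norm_lt_one {x y : ℤ_[p]} (hx : ‖x‖ < 1) (hy : IsUnit y) :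
    IsUnit (x + y) := by
  rw [isUnit_iff] at hy ⊢
  rw [IsUltrametricDist.norm_add_eq_max_of_norm_ne_norm (by rw [hy]; exact hx.ne), hy,
    max_eq_right hx.le]

theorem isUnit_two (hp : p ≠ 2) : IsUnit (2 : ℤ_[p]) := by
  rw [isUnit_iff, ← Nat.cast_ofNat, norm_natCast_eq_one_iff]
  exact (Nat.coprime_primes Fact.out Nat.prime_two).mpr hp

theorem norm_p_pow_lt_one {r : ℕ} (hr : r ≠ 0) : ‖(p : ℤ_[p]) ^ r‖ < 1 := by
  rw [norm_pow, norm_p]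
  have hp : 1 < (p : ℝ) := mod_cast (Fact.out : p.Prime).one_lt
  exact pow_lt_one₀ (by positivity) (inv_lt_one_of_one_lt₀ hp) hr

theorem exists_mul_sq_add_mul_eq {a b : ℤ_[p]} (ha : ‖a‖ < 1) (hb : IsUnit b) (w : ℤ_[p]) :
    ∃ v, a * v ^ 2 + b * v = w := by
  set F : ℤ_[p][X] := C a * X ^ 2 + C b * X - C w
  set v₀ : ℤ_[p] := ↑hb.unit⁻¹ * w
  have hbv₀ : b * v₀ = w := by rw [← mul_assoc, hb.mul_val_inv, one_mul]
  have hF : F.aeval v₀ = a * v₀ ^ 2 := by simp [F, hbv₀]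
  have hF' : F.derivative.aeval v₀ = 2 * a * v₀ + b := by
    simp only [F, derivative_sub, derivative_add, derivative_C_mul_X_pow, derivative_C_mul_X,
      derivative_C, coe_aeval_eq_eval, eval_sub, eval_add, eval_C, eval_mul, eval_pow, eval_X,
      eval_zero]
    ring
  have hF'unit : ‖F.derivative.aeval v₀‖ = 1 := by
    rw [hF', ← isUnit_iff]
    exact isUnit_add_of_norm_lt_one (by rw [mul_right_comm]; exact norm_lt_one_mul ha) hb
  obtain ⟨v, hv, -⟩ := hensels_lemma (F := F) (a := v₀) (by
    rw [hF, hF'unit, one_pow, mul_comm]; exact norm_lt_one_mul ha)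
  exact ⟨v, by simpa [F, sub_eq_zero] using hv⟩

end PadicInt

theorem sq_coe_add_div_p_pow {p : ℕ} [Fact p.Prime] (u v : ℤ_[p]) (r : ℕ) :
    ((v : ℚ_[p]) + (u : ℚ_[p]) / (p : ℚ_[p]) ^ r) ^ 2
      = ((p : ℚ_[p]) ^ r * ((p ^ r * v ^ 2 + 2 * u * v : ℤ_[p]) : ℚ_[p]) + (u : ℚ_[p]) ^ 2)
          / (p : ℚ_[p]) ^ (2 * r) := by
  have hp : (p : ℚ_[p]) ≠ 0 := Nat.cast_ne_zero.mpr (Fact.out : p.Prime).ne_zero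
  have h2 : ((2 : ℤ_[p]) : ℚ_[p]) = 2 := PadicInt.coe_natCast 2
  push_cast [h2]
  field_simp
  ring

open PadicInt in
/-- For `p` an odd prime, `u ∈ ℤ_p^×`, and `r ≥ 1`, as subsets of `ℚ_p`:
`(ℤ_p^× + u/p^r)² = (p^r ℤ_p^× + u²)/p^{2r}` and `(ℤ_p + u/p^r)² = (p^r ℤ_p + u²)/p^{2r}`. -/
theorem stmt_17 (p : ℕ) [Fact p.Prime] (hp : p ≠ 2) (u : ℤ_[p]) (hu : IsUnit u)
    (r : ℕ) (hr : 1 ≤ r) :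
    ({z : ℚ_[p] | ∃ v : ℤ_[p], IsUnit v ∧ z = ((v : ℚ_[p]) + (u : ℚ_[p]) / (p : ℚ_[p]) ^ r) ^ 2}
        = {z : ℚ_[p] | ∃ w : ℤ_[p], IsUnit w ∧
            z = ((p : ℚ_[p]) ^ r * (w : ℚ_[p]) + (u : ℚ_[p]) ^ 2) / (p : ℚ_[p]) ^ (2 * r)}) ∧
    ({z : ℚ_[p] | ∃ v : ℤ_[p], z = ((v : ℚ_[p]) + (u : ℚ_[p]) / (p : ℚ_[p]) ^ r) ^ 2}
        = {z : ℚ_[p] | ∃ w : ℤ_[p],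
            z = ((p : ℚ_[p]) ^ r * (w : ℚ_[p]) + (u : ℚ_[p]) ^ 2) / (p : ℚ_[p]) ^ (2 * r)}) := by
  set φ : ℤ_[p] → ℤ_[p] := fun v ↦ p ^ r * v ^ 2 + 2 * u * v
  have hpr : ‖(p : ℤ_[p]) ^ r‖ < 1 := norm_p_pow_lt_one (by omega)
  have h2u : IsUnit (2 * u) := (isUnit_two hp).mul hu
  have hφ_surj (w : ℤ_[p]) : ∃ v, φ v = w := exists_mul_sq_add_mul_eq hpr h2u w
  have hφ_isUnit (v : ℤ_[p]) : IsUnit (φ v) ↔ IsUnit v := by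
    rw [show φ v = v * (p ^ r * v + 2 * u) by ring, IsUnit.mul_iff,
      and_iff_left (isUnit_add_of_norm_lt_one (by rw [mul_comm]; exact norm_lt_one_mul hpr) h2u)]
  refine ⟨Set.ext fun z ↦ ⟨?_, ?_⟩, Set.ext fun z ↦ ⟨?_, ?_⟩⟩
  · rintro ⟨v, hv, rfl⟩
    exact ⟨φ v, (hφ_isUnit v).2 hv, sq_coe_add_div_p_pow u v r⟩
  · rintro ⟨w, hw, rfl⟩
    obtain ⟨v, rfl⟩ := hφ_surj w
    exact ⟨v, (hφ_isUnit v).1 hw, (sq_coe_add_div_p_pow u v r).symm⟩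
  · rintro ⟨v, rfl⟩
    exact ⟨φ v, sq_coe_add_div_p_pow u v r⟩
  · rintro ⟨w, rfl⟩
    obtain ⟨v, rfl⟩ := hφ_surj w
    exact ⟨v, (sq_coe_add_div_p_pow u v r).symm⟩
end
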